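/- (Ideal EOS formula for E.) Let Γ > 1 and let (ρ_L, p_L), (ρ_R, p_R) be pairs of positive reals with ρ_L/p_L ≠ ρ_R/p_R. For K ∈ {L,R} set θ_K = p_K/ρ_K, z₂,K = ρ_K/p_K, h_K = 1 + Γθ_K/(Γ−1), S_K = (1/(Γ−1))·ln(p_K/ρ_K^Γ), and W₁,K = z₂,K h_K − S_K. Then E := (W₁,R − W₁,L − (ln ρ_R − ln ρ_L))/(z₂,R − z₂,L) = 1 + (ln z₂,R − ln z₂,L)/((Γ−1)(z₂,R − z₂,L)); i.e., E = 1 + 1/((Γ−1){{z₂}}_ln), where {{a}}_ln = (a_R−a_L)/(ln a_R − ln a_L) is the logarithmic mean. -/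
import Mathlib


/-- The explicit formula for `E = ([W₁] − [ln z₁])/[z₂]` for the ideal EOS
`h(θ) = 1 + Γθ/(Γ−1)`, `S = (1/(Γ−1))ln(p/ρ^Γ)`:
`E = 1 + [ln z₂]/((Γ−1)[z₂]) = 1 + 1/((Γ−1){{z₂}}_ln)`. -/
theorem stmt8 (Γ ρL pL ρR pR : ℝ) (hΓ : 1 < Γ)
    (hρL : 0 < ρL) (hpL : 0 < pL) (hρR : 0 < ρR) (hpR : 0 < pR)
    (hne : ρL / pL ≠ ρR / pR) :
    let z2L : ℝ := ρL / pL
    let z2R : ℝ := ρR / pR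
    let θL : ℝ := pL / ρL
    let θR : ℝ := pR / ρR
    let hL : ℝ := 1 + Γ * θL / (Γ - 1)
    let hR : ℝ := 1 + Γ * θR / (Γ - 1)
    let SL : ℝ := (1 / (Γ - 1)) * Real.log (pL / ρL ^ Γ)
    let SR : ℝ := (1 / (Γ - 1)) * Real.log (pR / ρR ^ Γ)
    let W1L : ℝ := z2L * hL - SL
    let W1R : ℝ := z2R * hR - SR
    (W1R - W1L - (Real.log ρR - Real.log ρL)) / (z2R - z2L)
      = 1 + (Real.log z2R - Real.log z2L) / ((Γ - 1) * (z2R - z2L)) := by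
  intro z2L z2R θL θR hL hR SL SR W1L W1R
  have hG : Γ - 1 ≠ 0 := by linarith
  have hsub : z2R - z2L ≠ 0 := sub_ne_zero.mpr (Ne.symm hne)
  have hlogL : Real.log (pL / ρL ^ Γ) = Real.log pL - Γ * Real.log ρL := by
    rw [Real.log_div hpL.ne' (Real.rpow_pos_of_pos hρL Γ).ne', Real.log_rpow hρL]
  have hlogR : Real.log (pR / ρR ^ Γ) = Real.log pR - Γ * Real.log ρR := by
    rw [Real.log_div hpR.ne' (Real.rpow_pos_of_pos hρR Γ).ne', Real.log_rpow hρR]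
  have hz2L : Real.log z2L = Real.log ρL - Real.log pL := Real.log_div hρL.ne' hpL.ne'
  have hz2R : Real.log z2R = Real.log ρR - Real.log pR := Real.log_div hρR.ne' hpR.ne'
  have hθL : θL * z2L = 1 := by
    show pL / ρL * (ρL / pL) = 1
    field_simp
  have hθR : θR * z2R = 1 := by
    show pR / ρR * (ρR / pR) = 1
    field_simp
  show (z2R * (1 + Γ * θR / (Γ - 1)) - (1 / (Γ - 1)) * Real.log (pR / ρR ^ Γ)
      - (z2L * (1 + Γ * θL / (Γ - 1)) - (1 / (Γ - 1)) * Real.log (pL / ρL ^ Γ))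
      - (Real.log ρR - Real.log ρL)) / (z2R - z2L)
      = 1 + (Real.log z2R - Real.log z2L) / ((Γ - 1) * (z2R - z2L))
  rw [hlogL, hlogR, hz2L, hz2R]
  have h1 : z2R * (1 + Γ * θR / (Γ - 1)) = z2R + Γ / (Γ - 1) := by
    field_simp
    nlinarith [hθR]
  have h2 : z2L * (1 + Γ * θL / (Γ - 1)) = z2L + Γ / (Γ - 1) := by
    field_simp
    nlinarith [hθL]
  rw [h1, h2]
  field_simp
  ring
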